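/- arXiv:2101.02050 — 4 statements merged into one kernel-verified Lean document; each statement's English description precedes it below -/
import Mathlib

section
/- The composition of a lower-triangular with an upper-triangular 3-PI operator is a sum of lower- and upper-triangular 3-PI operators: (P_{0,R1,0}(P_{0,0,Q2}x))(s) = ∫_a^s [∫_a^θ R1(s,η)Q2(η,θ)dη] x(θ)dθ + ∫_s^b [∫_a^s R1(s,η)Q2(η,θ)dη] x(θ)dθ. -/
open MeasureTheory intervalIntegral Matrix Set

section Aux

variable {E : Type*} [NormedAddCommGroup E] [NormedSpace ℝ E]

/-- Fubini for a rectangle, interval-integral form. -/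
theorem swap_rect {F : ℝ → ℝ → E} (hF : Continuous (Function.uncurry F))
    {a s b : ℝ} (has : a ≤ s) (hsb : s ≤ b) :
    (∫ η in a..s, ∫ θ in s..b, F η θ) = ∫ θ in s..b, ∫ η in a..s, F η θ := by
  rw [intervalIntegral.integral_of_le has, intervalIntegral.integral_of_le hsb]
  simp_rw [intervalIntegral.integral_of_le hsb, intervalIntegral.integral_of_le has]
  apply MeasureTheory.integral_integral_swap
  rw [Measure.prod_restrict]
  exact ((hF.continuousOn.integrableOn_compact
    (isCompact_Icc.prod isCompact_Icc : IsCompact (Icc a s ×ˢ Icc s b)))).mono_set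
    (Set.prod_mono Ioc_subset_Icc_self Ioc_subset_Icc_self)

/-- Fubini for a triangle, interval-integral form. -/
theorem swap_tri {F : ℝ → ℝ → E} (hF : Continuous (Function.uncurry F))
    {a s : ℝ} (has : a ≤ s) :
    (∫ η in a..s, ∫ θ in η..s, F η θ) = ∫ θ in a..s, ∫ η in a..θ, F η θ := by
  set G : ℝ → ℝ → E := fun η θ => if η < θ then F η θ else 0 with hG
  have hGind : Function.uncurry G =
      Set.indicator {q : ℝ × ℝ | q.1 < q.2} (Function.uncurry F) := by
    funext q
    by_cases h : q.1 < q.2 <;>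
      simp [Function.uncurry, hG, h, Set.indicator_apply]
  have hint : Integrable (Function.uncurry G)
      ((volume.restrict (Ioc a s)).prod (volume.restrict (Ioc a s))) := by
    rw [hGind, Measure.prod_restrict]
    refine Integrable.indicator ?_ (measurableSet_lt measurable_fst measurable_snd)
    exact ((hF.continuousOn.integrableOn_compact
      (isCompact_Icc.prod isCompact_Icc : IsCompact (Icc a s ×ˢ Icc a s)))).mono_set
      (Set.prod_mono Ioc_subset_Icc_self Ioc_subset_Icc_self)
  have hswap := MeasureTheory.integral_integral_swap hint
  have h1 : (∫ η in a..s, ∫ θ in η..s, F η θ)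
      = ∫ η in Ioc a s, ∫ θ in Ioc a s, G η θ := by
    rw [intervalIntegral.integral_of_le has]
    refine setIntegral_congr_fun measurableSet_Ioc fun η hη => ?_
    have : (fun θ => G η θ) = Set.indicator (Ioi η) (fun θ => F η θ) := by
      funext θ
      by_cases h : η < θ <;> simp [hG, h, Set.indicator_apply]
    rw [this, setIntegral_indicator measurableSet_Ioi,
      intervalIntegral.integral_of_le hη.2]
    congr 1
    rw [Set.Ioc_inter_Ioi, sup_eq_right.2 hη.1.le]
  have h2 : (∫ θ in a..s, ∫ η in a..θ, F η θ)
      = ∫ θ in Ioc a s, ∫ η in Ioc a s, G η θ := by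
    rw [intervalIntegral.integral_of_le has]
    refine setIntegral_congr_fun measurableSet_Ioc fun θ hθ => ?_
    have : (fun η => G η θ) = Set.indicator (Iio θ) (fun η => F η θ) := by
      funext η
      by_cases h : η < θ <;> simp [hG, h, Set.indicator_apply]
    rw [this, setIntegral_indicator measurableSet_Iio,
      intervalIntegral.integral_of_le hθ.1.le, integral_Ioc_eq_integral_Ioo]
    congr 1
    have : Ioc a s ∩ Iio θ = Ioo a θ := by
      ext y
      simp only [mem_inter_iff, mem_Ioc, mem_Iio, mem_Ioo]
      constructor
      · rintro ⟨⟨h1, h2⟩, h3⟩; exact ⟨h1, h3⟩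
      · rintro ⟨h1, h3⟩; exact ⟨⟨h1, h3.le.trans hθ.2⟩, h3⟩
    rw [this]
  rw [h1, h2, hswap]

end Aux

/-- The composition of a lower-triangular with an upper-triangular 3-PI operator
is a sum of lower- and upper-triangular 3-PI operators. -/
theorem comp_lower_upper_3PI (m n p : ℕ) (a b : ℝ) (hab : a ≤ b)
    (R1 : ℝ → ℝ → Matrix (Fin m) (Fin n) ℝ)
    (Q2 : ℝ → ℝ → Matrix (Fin n) (Fin p) ℝ)
    (hR1 : Continuous fun q : ℝ × ℝ => R1 q.1 q.2)
    (hQ2 : Continuous fun q : ℝ × ℝ => Q2 q.1 q.2)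
    (x : ℝ → Fin p → ℝ) (hx : Continuous x)
    (s : ℝ) (hs : s ∈ Set.Icc a b) :
    (∫ η in a..s, (R1 s η).mulVec (∫ θ in η..b, (Q2 η θ).mulVec (x θ)))
      = (∫ θ in a..s, ∫ η in a..θ, (R1 s η * Q2 η θ).mulVec (x θ))
        + ∫ θ in s..b, ∫ η in a..s, (R1 s η * Q2 η θ).mulVec (x θ) := by
  obtain ⟨has, hsb⟩ := hs
  set g : ℝ → ℝ → Fin n → ℝ := fun η θ => (Q2 η θ).mulVec (x θ) with hg
  set F : ℝ → ℝ → Fin m → ℝ := fun η θ => (R1 s η * Q2 η θ).mulVec (x θ) with hF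
  have hgc : Continuous (Function.uncurry g) :=
    hQ2.matrix_mulVec (hx.comp continuous_snd)
  have hFc : Continuous (Function.uncurry F) := by
    have hR1' : Continuous fun q : ℝ × ℝ => R1 s q.1 :=
      hR1.comp (continuous_const.prodMk continuous_fst)
    exact (hR1'.matrix_mul hQ2).matrix_mulVec (hx.comp continuous_snd)
  have hgη : ∀ η, Continuous (g η) := fun η =>
    hgc.comp (Continuous.prodMk_right η)
  -- push mulVec inside interval integrals
  have key : ∀ (η c d : ℝ),
      (R1 s η).mulVec (∫ θ in c..d, g η θ) = ∫ θ in c..d, F η θ := by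
    intro η c d
    let L : (Fin n → ℝ) →L[ℝ] (Fin m → ℝ) :=
      LinearMap.toContinuousLinearMap (Matrix.mulVecLin (R1 s η))
    have hL : ∀ v, L v = (R1 s η).mulVec v := fun v => rfl
    have := ContinuousLinearMap.intervalIntegral_comp_comm L
      ((hgη η).intervalIntegrable c d : IntervalIntegrable (g η) MeasureTheory.volume c d)
    rw [← hL, ← this]
    refine intervalIntegral.integral_congr fun θ _ => ?_
    show L (g η θ) = F η θ
    rw [hL]
    simp only [hg, hF]
    exact Matrix.mulVec_mulVec (x θ) (R1 s η) (Q2 η θ)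
  -- integrability of the two pieces in η
  have hc1 : Continuous fun η => ∫ θ in η..s, F η θ := by
    have : Continuous fun η => ∫ θ in s..η, F η θ :=
      intervalIntegral.continuous_parametric_intervalIntegral_of_continuous hFc
        continuous_id
    have h' : (fun η => ∫ θ in η..s, F η θ)
        = fun η => -∫ θ in s..η, F η θ := by
      funext η; rw [intervalIntegral.integral_symm]
    rw [h']
    exact this.neg
  have hc2 : Continuous fun η => ∫ θ in s..b, F η θ :=
    intervalIntegral.continuous_parametric_intervalIntegral_of_continuous' hFc s b
  calc (∫ η in a..s, (R1 s η).mulVec (∫ θ in η..b, g η θ))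
      = ∫ η in a..s,
          ((∫ θ in η..s, F η θ) + ∫ θ in s..b, F η θ) := by
        refine intervalIntegral.integral_congr fun η _ => ?_
        rw [← intervalIntegral.integral_add_adjacent_intervals
          ((hgη η).intervalIntegrable η s) ((hgη η).intervalIntegrable s b),
          Matrix.mulVec_add, key, key]
    _ = (∫ η in a..s, ∫ θ in η..s, F η θ)
          + ∫ η in a..s, ∫ θ in s..b, F η θ :=
        intervalIntegral.integral_add (hc1.intervalIntegrable a s)
          (hc2.intervalIntegrable a s)
    _ = (∫ θ in a..s, ∫ η in a..θ, F η θ)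
          + ∫ θ in s..b, ∫ η in a..s, F η θ := by
        rw [swap_tri hFc has, swap_rect hFc has hsb]
end

section
/- Adjoint of a 3-PI operator: for the operator P_{R0,R1,R2} on L2^n[a,b] with real matrix-valued parameters, the L2-adjoint is the 3-PI operator with parameters R̂0(s) = R0(s)ᵀ, R̂1(s,θ) = R2(θ,s)ᵀ, R̂2(s,θ) = R1(θ,s)ᵀ; that is, ⟨P_{R0,R1,R2}x, y⟩_{L2} = ⟨x, P_{R̂0,R̂1,R̂2}y⟩_{L2} for all x,y ∈ L2^n[a,b]. -/
set_option maxHeartbeats 1000000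

open MeasureTheory intervalIntegral Matrix

private lemma triangle_swap {a b : ℝ} (hab : a ≤ b) (F : ℝ → ℝ → ℝ)
    (hF : Continuous fun p : ℝ × ℝ => F p.1 p.2) :
    (∫ s in a..b, ∫ θ in a..s, F s θ) = ∫ θ in a..b, ∫ s in θ..b, F s θ := by
  classical
  set T : Set (ℝ × ℝ) := {p : ℝ × ℝ | p.2 ≤ p.1} with hT
  have hTm : MeasurableSet T := measurableSet_le measurable_snd measurable_fst
  set g : ℝ × ℝ → ℝ := T.indicator (fun p => F p.1 p.2) with hgdef
  have hgsm : StronglyMeasurable g := hF.stronglyMeasurable.indicator hTm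
  obtain ⟨C, hC⟩ := (isCompact_Icc.prod isCompact_Icc).exists_bound_of_continuousOn
    (s := Set.Icc a b ×ˢ Set.Icc a b) hF.continuousOn
  have hint : Integrable (Function.uncurry fun s θ => g (s, θ))
      ((volume.restrict (Set.Ioc a b)).prod (volume.restrict (Set.Ioc a b))) := by
    have : (Function.uncurry fun s θ => g (s, θ)) = g := rfl
    rw [this, Measure.prod_restrict]
    apply Measure.integrableOn_of_bounded (M := C)
    · rw [Measure.prod_prod]
      exact ENNReal.mul_ne_top measure_Ioc_lt_top.ne measure_Ioc_lt_top.ne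
    · exact hgsm.aestronglyMeasurable
    · filter_upwards [ae_restrict_mem (measurableSet_Ioc.prod measurableSet_Ioc)] with p hp
      calc ‖g p‖ ≤ ‖F p.1 p.2‖ := norm_indicator_le_norm_self _ p
        _ ≤ C := hC p ⟨⟨hp.1.1.le, hp.1.2⟩, ⟨hp.2.1.le, hp.2.2⟩⟩
  have h1 : (∫ s in a..b, ∫ θ in a..s, F s θ)
      = ∫ s in Set.Ioc a b, ∫ θ in Set.Ioc a b, g (s, θ) := by
    rw [intervalIntegral.integral_of_le hab]
    refine setIntegral_congr_fun measurableSet_Ioc fun s hs => ?_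
    have hfun : (fun θ => g (s, θ)) = (Set.Iic s).indicator (F s) := by
      funext θ
      by_cases h : θ ≤ s <;> simp [hgdef, hT, Set.indicator, h]
    rw [hfun, setIntegral_indicator measurableSet_Iic]
    have : Set.Ioc a b ∩ Set.Iic s = Set.Ioc a s := by
      ext u; simp only [Set.mem_inter_iff, Set.mem_Ioc, Set.mem_Iic]
      exact ⟨fun h => ⟨h.1.1, h.2⟩, fun h => ⟨⟨h.1, h.2.trans hs.2⟩, h.2⟩⟩
    rw [this, intervalIntegral.integral_of_le hs.1.le]
  have h3 : (∫ θ in Set.Ioc a b, ∫ s in Set.Ioc a b, g (s, θ))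
      = ∫ θ in a..b, ∫ s in θ..b, F s θ := by
    rw [intervalIntegral.integral_of_le hab]
    refine setIntegral_congr_fun measurableSet_Ioc fun θ hθ => ?_
    have hfun : (fun s => g (s, θ)) = (Set.Ici θ).indicator (fun s => F s θ) := by
      funext s
      by_cases h : θ ≤ s <;> simp [hgdef, hT, Set.indicator, h]
    rw [hfun, setIntegral_indicator measurableSet_Ici]
    have : Set.Ioc a b ∩ Set.Ici θ = Set.Icc θ b := by
      ext u; simp only [Set.mem_inter_iff, Set.mem_Ioc, Set.mem_Icc, Set.mem_Ici]
      exact ⟨fun h => ⟨h.2, h.1.2⟩, fun h => ⟨⟨hθ.1.trans_le h.1, h.2⟩, h.1⟩⟩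
    rw [this, integral_Icc_eq_integral_Ioc, intervalIntegral.integral_of_le hθ.2]
  rw [h1, MeasureTheory.integral_integral_swap hint, h3]

private lemma dot_integral {n : ℕ} (a c : ℝ) (v : ℝ → Fin n → ℝ) (hv : Continuous v)
    (w : Fin n → ℝ) :
    (∫ θ in a..c, v θ) ⬝ᵥ w = ∫ θ in a..c, v θ ⬝ᵥ w := by
  have hcomp : ∀ i : Fin n, (∫ θ in a..c, v θ) i = ∫ θ in a..c, v θ i := fun i =>
    ((ContinuousLinearMap.proj (R := ℝ) (φ := fun _ : Fin n => ℝ) i).intervalIntegral_comp_comm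
      (hv.intervalIntegrable _ _)).symm
  simp only [dotProduct]
  rw [intervalIntegral.integral_finset_sum (f := fun i θ => v θ i * w i) (fun i _ =>
    ((show Continuous fun θ => v θ i * w i from
      ((continuous_apply i).comp hv).mul continuous_const)).intervalIntegrable _ _)]
  exact Finset.sum_congr rfl fun i _ => by
    rw [hcomp i, ← intervalIntegral.integral_mul_const]

private lemma tdot {n : ℕ} (M : Matrix (Fin n) (Fin n) ℝ) (v w : Fin n → ℝ) :
    v ⬝ᵥ Mᵀ.mulVec w = M.mulVec v ⬝ᵥ w := by
  rw [Matrix.dotProduct_mulVec, Matrix.vecMul_transpose]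

/-- Adjoint of a 3-PI operator: the L2-adjoint of `P_{R0,R1,R2}` is the 3-PI
operator with parameters `R̂0(s) = R0(s)ᵀ`, `R̂1(s,θ) = R2(θ,s)ᵀ`,
`R̂2(s,θ) = R1(θ,s)ᵀ`. -/
theorem adjoint_of_3PI (n : ℕ) (a b : ℝ) (hab : a ≤ b)
    (R0 : ℝ → Matrix (Fin n) (Fin n) ℝ)
    (R1 R2 : ℝ → ℝ → Matrix (Fin n) (Fin n) ℝ)
    (hR0 : Continuous R0)
    (hR1 : Continuous fun q : ℝ × ℝ => R1 q.1 q.2)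
    (hR2 : Continuous fun q : ℝ × ℝ => R2 q.1 q.2)
    (x y : ℝ → Fin n → ℝ) (hx : Continuous x) (hy : Continuous y) :
    (∫ s in a..b,
        ((R0 s).mulVec (x s) + (∫ θ in a..s, (R1 s θ).mulVec (x θ))
          + ∫ θ in s..b, (R2 s θ).mulVec (x θ)) ⬝ᵥ y s)
      = ∫ s in a..b,
          x s ⬝ᵥ ((R0 s)ᵀ.mulVec (y s)
            + (∫ θ in a..s, ((R2 θ s)ᵀ).mulVec (y θ))
            + ∫ θ in s..b, ((R1 θ s)ᵀ).mulVec (y θ)) := by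
  set F1 : ℝ → ℝ → ℝ := fun s θ => (R1 s θ).mulVec (x θ) ⬝ᵥ y s with hF1
  set F2 : ℝ → ℝ → ℝ := fun s θ => (R2 s θ).mulVec (x θ) ⬝ᵥ y s with hF2
  set f0 : ℝ → ℝ := fun s => (R0 s).mulVec (x s) ⬝ᵥ y s with hf0
  -- continuity facts
  have hxc : ∀ s : ℝ, Continuous fun θ => (R1 s θ).mulVec (x θ) := fun s =>
    (hR1.comp (Continuous.prodMk_right s)).matrix_mulVec hx
  have hxc2 : ∀ s : ℝ, Continuous fun θ => (R2 s θ).mulVec (x θ) := fun s =>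
    (hR2.comp (Continuous.prodMk_right s)).matrix_mulVec hx
  have hyc1 : ∀ s : ℝ, Continuous fun θ => ((R1 θ s)ᵀ).mulVec (y θ) := fun s =>
    ((hR1.comp (continuous_id.prodMk continuous_const)).matrix_transpose).matrix_mulVec hy
  have hyc2 : ∀ s : ℝ, Continuous fun θ => ((R2 θ s)ᵀ).mulVec (y θ) := fun s =>
    ((hR2.comp (continuous_id.prodMk continuous_const)).matrix_transpose).matrix_mulVec hy
  have hF1c : Continuous fun p : ℝ × ℝ => F1 p.1 p.2 :=
    (hR1.matrix_mulVec (hx.comp continuous_snd)).dotProduct (hy.comp continuous_fst)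
  have hF2c : Continuous fun p : ℝ × ℝ => F2 p.1 p.2 :=
    (hR2.matrix_mulVec (hx.comp continuous_snd)).dotProduct (hy.comp continuous_fst)
  -- rewrite LHS integrand
  have lhs_eq : ∀ s : ℝ,
      ((R0 s).mulVec (x s) + (∫ θ in a..s, (R1 s θ).mulVec (x θ))
        + ∫ θ in s..b, (R2 s θ).mulVec (x θ)) ⬝ᵥ y s
      = f0 s + (∫ θ in a..s, F1 s θ) + ∫ θ in s..b, F2 s θ := by
    intro s
    rw [add_dotProduct, add_dotProduct,
      dot_integral a s _ (hxc s), dot_integral s b _ (hxc2 s)]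
  have rhs_eq : ∀ s : ℝ,
      x s ⬝ᵥ ((R0 s)ᵀ.mulVec (y s)
        + (∫ θ in a..s, ((R2 θ s)ᵀ).mulVec (y θ))
        + ∫ θ in s..b, ((R1 θ s)ᵀ).mulVec (y θ))
      = f0 s + (∫ θ in a..s, F2 θ s) + ∫ θ in s..b, F1 θ s := by
    intro s
    simp only [hF1, hF2, hf0, dotProduct_add]
    congr 1
    · congr 1
      · exact tdot _ _ _
      · rw [dotProduct_comm, dot_integral a s _ (hyc2 s)]
        exact intervalIntegral.integral_congr fun θ _ => by
          rw [dotProduct_comm, tdot]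
    · rw [dotProduct_comm, dot_integral s b _ (hyc1 s)]
      exact intervalIntegral.integral_congr fun θ _ => by
        rw [dotProduct_comm, tdot]
  simp only [lhs_eq, rhs_eq]
  -- continuity of the three pieces
  have hf0c : Continuous f0 := (hR0.matrix_mulVec hx).dotProduct hy
  have hI1 : Continuous fun s => ∫ θ in a..s, F1 s θ :=
    continuous_parametric_intervalIntegral_of_continuous (μ := volume) (f := F1) (by exact hF1c) continuous_id
  have hI2 : Continuous fun s => ∫ θ in s..b, F2 s θ := by
    have h := continuous_parametric_intervalIntegral_of_continuous (μ := volume) (f := F2) (a₀ := b)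
      (by exact hF2c) continuous_id
    have : (fun s => ∫ θ in s..b, F2 s θ) = fun s => -∫ θ in b..s, F2 s θ := by
      funext s; rw [intervalIntegral.integral_symm]
    rw [this]; exact h.neg
  have hI3 : Continuous fun s => ∫ θ in a..s, F2 θ s :=
    continuous_parametric_intervalIntegral_of_continuous
      (μ := volume) (f := fun s θ => F2 θ s) (by exact hF2c.comp continuous_swap) continuous_id
  have hI4 : Continuous fun s => ∫ θ in s..b, F1 θ s := by
    have h := continuous_parametric_intervalIntegral_of_continuous
      (μ := volume) (f := fun s θ => F1 θ s) (a₀ := b) (by exact hF1c.comp continuous_swap) continuous_id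
    have : (fun s => ∫ θ in s..b, F1 θ s) = fun s => -∫ θ in b..s, F1 θ s := by
      funext s; rw [intervalIntegral.integral_symm]
    rw [this]; exact h.neg
  rw [intervalIntegral.integral_add ((hf0c.intervalIntegrable _ _).add
      (hI1.intervalIntegrable _ _)) (hI2.intervalIntegrable _ _),
    intervalIntegral.integral_add (hf0c.intervalIntegrable _ _) (hI1.intervalIntegrable _ _),
    intervalIntegral.integral_add ((hf0c.intervalIntegrable _ _).add
      (hI3.intervalIntegrable _ _)) (hI4.intervalIntegrable _ _),
    intervalIntegral.integral_add (hf0c.intervalIntegrable _ _) (hI3.intervalIntegrable _ _)]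
  rw [triangle_swap hab F1 hF1c, ← triangle_swap hab (fun s θ => F2 θ s)
    (hF2c.comp continuous_swap)]
  ring
end

section
/- The induced L2[0,1] operator norm of the Volterra integral operator T defined by (Tx)(s) = ∫_0^s x(θ)dθ equals 2/π. -/
open MeasureTheory intervalIntegral Set
open scoped ENNReal

noncomputable section

private def cw (θ : ℝ) : ℝ := Real.cos (Real.pi/2*θ)

private lemma cw_cont : Continuous cw :=
  Real.continuous_cos.comp (continuous_const.mul continuous_id)

private lemma cw_pos {θ : ℝ} (h0 : 0 < θ) (h1 : θ < 1) : 0 < cw θ := by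
  apply Real.cos_pos_of_mem_Ioo
  constructor
  · nlinarith [Real.pi_pos]
  · nlinarith [Real.pi_pos]

private lemma vol_cos_int (s : ℝ) :
    ∫ θ in (0:ℝ)..s, cw θ = 2/Real.pi * Real.sin (Real.pi/2*s) := by
  have h : (Real.pi/2) ≠ 0 := by positivity
  show (∫ θ in (0:ℝ)..s, Real.cos (Real.pi/2*θ)) = _
  rw [intervalIntegral.integral_comp_mul_left Real.cos h, integral_cos]
  simp only [mul_zero, Real.sin_zero, sub_zero, smul_eq_mul]
  field_simp

private lemma vol_sin_int (θ : ℝ) :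
    ∫ s in θ..(1:ℝ), Real.sin (Real.pi/2*s) = 2/Real.pi * cw θ := by
  have h : (Real.pi/2) ≠ 0 := by positivity
  rw [intervalIntegral.integral_comp_mul_left Real.sin h, integral_sin]
  simp only [mul_one, Real.cos_pi_div_two, zero_sub, smul_eq_mul, cw]
  field_simp
  ring

private lemma vol_cos_sq_int : ∫ θ in (0:ℝ)..1, cw θ^2 = 1/2 := by
  have h : (Real.pi/2) ≠ 0 := by positivity
  show (∫ θ in (0:ℝ)..1, Real.cos (Real.pi/2*θ)^2) = 1/2
  rw [intervalIntegral.integral_comp_mul_left (fun u => Real.cos u ^ 2) h,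
    integral_cos_sq]
  simp [Real.cos_pi_div_two, Real.sin_pi_div_two]
  field_simp

private lemma vol_sin_sq_int : ∫ θ in (0:ℝ)..1, Real.sin (Real.pi/2*θ)^2 = 1/2 := by
  have h : (Real.pi/2) ≠ 0 := by positivity
  rw [intervalIntegral.integral_comp_mul_left (fun u => Real.sin u ^ 2) h,
    integral_sin_sq]
  simp [Real.cos_pi_div_two, Real.sin_pi_div_two]
  field_simp

private lemma stepA {x : ℝ → ℝ} (hm : Measurable x) (h1 : IntegrableOn x (Icc (0:ℝ) 1))
    {s : ℝ} (hs : s ∈ Ioo (0:ℝ) 1) :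
    ENNReal.ofReal ((∫ θ in (0:ℝ)..s, x θ) ^ 2)
      ≤ ENNReal.ofReal (2/Real.pi * Real.sin (Real.pi/2*s)) *
        ∫⁻ θ in Ioc (0:ℝ) s, ENNReal.ofReal (x θ ^ 2 / cw θ) := by
  have hsub : Ioc (0:ℝ) s ⊆ Icc (0:ℝ) 1 := fun θ hθ => ⟨hθ.1.le, hθ.2.trans hs.2.le⟩
  have hx1 : IntegrableOn x (Ioc (0:ℝ) s) := h1.mono_set hsub
  have cpos : ∀ θ ∈ Ioc (0:ℝ) s, 0 < cw θ := fun θ hθ => cw_pos hθ.1 (lt_of_le_of_lt hθ.2 hs.2)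
  have hci : IntegrableOn cw (Ioc (0:ℝ) s) := cw_cont.integrableOn_Ioc
  have hpq : Real.HolderConjugate 2 2 := by constructor <;> norm_num
  set μ := volume.restrict (Ioc (0:ℝ) s) with hμ
  set F : ℝ → ℝ≥0∞ := fun θ => ENNReal.ofReal (Real.sqrt (cw θ)) with hF
  set G : ℝ → ℝ≥0∞ := fun θ => ENNReal.ofReal (|x θ| / Real.sqrt (cw θ)) with hG
  have hFm : AEMeasurable F μ :=
    ((Real.continuous_sqrt.comp cw_cont).measurable.ennreal_ofReal).aemeasurable
  have hGm : AEMeasurable G μ :=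
    (((hm.abs).div (Real.continuous_sqrt.comp cw_cont).measurable).ennreal_ofReal).aemeasurable
  have hold := ENNReal.lintegral_mul_le_Lp_mul_Lq μ hpq hFm hGm
  have hFG : (∫⁻ θ, (F * G) θ ∂μ) = ∫⁻ θ in Ioc (0:ℝ) s, ENNReal.ofReal |x θ| := by
    rw [hμ]
    apply setLIntegral_congr_fun measurableSet_Ioc ?_
    intro θ hθ
    have h0 : (0:ℝ) < Real.sqrt (cw θ) := Real.sqrt_pos.2 (cpos θ hθ)
    simp only [Pi.mul_apply, hF, hG]
    rw [← ENNReal.ofReal_mul (Real.sqrt_nonneg _), mul_comm, div_mul_cancel₀ _ h0.ne']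
  have hF2 : (∫⁻ θ, F θ ^ (2:ℝ) ∂μ) = ∫⁻ θ in Ioc (0:ℝ) s, ENNReal.ofReal (cw θ) := by
    rw [hμ]
    apply setLIntegral_congr_fun measurableSet_Ioc ?_
    intro θ hθ
    dsimp only [hF]
    rw [ENNReal.ofReal_rpow_of_nonneg (Real.sqrt_nonneg _) (by norm_num)]
    norm_num
    rw [← ENNReal.ofReal_pow (Real.sqrt_nonneg _), Real.sq_sqrt (cpos θ hθ).le]
  have hG2 : (∫⁻ θ, G θ ^ (2:ℝ) ∂μ) = ∫⁻ θ in Ioc (0:ℝ) s, ENNReal.ofReal (x θ ^ 2 / cw θ) := by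
    rw [hμ]
    apply setLIntegral_congr_fun measurableSet_Ioc ?_
    intro θ hθ
    dsimp only [hG]
    rw [ENNReal.ofReal_rpow_of_nonneg (by positivity) (by norm_num)]
    norm_num
    rw [div_pow, sq_abs, Real.sq_sqrt (cpos θ hθ).le]
  have hcint : (∫⁻ θ in Ioc (0:ℝ) s, ENNReal.ofReal (cw θ))
      = ENNReal.ofReal (2/Real.pi * Real.sin (Real.pi/2*s)) := by
    rw [← ofReal_integral_eq_lintegral_ofReal hci
      ((ae_restrict_iff' measurableSet_Ioc).2 (ae_of_all _ fun θ hθ => (cpos θ hθ).le))]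
    congr 1
    rw [← intervalIntegral.integral_of_le hs.1.le]
    exact vol_cos_int s
  have habs : |∫ θ in (0:ℝ)..s, x θ| ≤ ∫ θ in Ioc (0:ℝ) s, |x θ| := by
    rw [intervalIntegral.integral_of_le hs.1.le]
    simpa [Real.norm_eq_abs] using
      norm_integral_le_integral_norm (μ := volume.restrict (Ioc (0:ℝ) s)) x
  have hA : ENNReal.ofReal (∫ θ in Ioc (0:ℝ) s, |x θ|)
      = ∫⁻ θ in Ioc (0:ℝ) s, ENNReal.ofReal |x θ| :=
    ofReal_integral_eq_lintegral_ofReal hx1.abs (ae_of_all _ fun θ => abs_nonneg _)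
  rw [hFG, hF2, hG2, hcint] at hold
  calc ENNReal.ofReal ((∫ θ in (0:ℝ)..s, x θ) ^ 2)
      = ENNReal.ofReal (|∫ θ in (0:ℝ)..s, x θ|) ^ 2 := by
        rw [← ENNReal.ofReal_pow (abs_nonneg _), sq_abs]
    _ ≤ (∫⁻ θ in Ioc (0:ℝ) s, ENNReal.ofReal |x θ|) ^ 2 := by
        apply pow_le_pow_left₀ zero_le
        rw [← hA]
        exact ENNReal.ofReal_le_ofReal habs
    _ ≤ ((ENNReal.ofReal (2/Real.pi * Real.sin (Real.pi/2*s))) ^ (1/2:ℝ) *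
          (∫⁻ θ in Ioc (0:ℝ) s, ENNReal.ofReal (x θ ^ 2 / cw θ)) ^ (1/2:ℝ)) ^ 2 :=
        pow_le_pow_left₀ zero_le hold 2
    _ = ENNReal.ofReal (2/Real.pi * Real.sin (Real.pi/2*s)) *
          ∫⁻ θ in Ioc (0:ℝ) s, ENNReal.ofReal (x θ ^ 2 / cw θ) := by
        rw [mul_pow, ← ENNReal.rpow_natCast (_ ^ (1/2:ℝ)) 2, ← ENNReal.rpow_natCast (_ ^ (1/2:ℝ)) 2,
          ← ENNReal.rpow_mul, ← ENNReal.rpow_mul]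
        norm_num

private lemma volterra_key {x : ℝ → ℝ} (hm : Measurable x)
    (h1 : IntegrableOn x (Icc (0:ℝ) 1))
    (h2 : IntegrableOn (fun t => x t ^ 2) (Icc (0:ℝ) 1)) :
    (∫ s in (0:ℝ)..1, (∫ θ in (0:ℝ)..s, x θ) ^ 2)
      ≤ 4/Real.pi^2 * ∫ s in (0:ℝ)..1, x s ^ 2 := by
  set ν := volume.restrict (Ioc (0:ℝ) 1) with hν
  set f : ℝ → ℝ≥0∞ := fun θ => ENNReal.ofReal (x θ ^ 2 / cw θ) with hf
  have hfm : Measurable f := ((hm.pow_const 2).div cw_cont.measurable).ennreal_ofReal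
  set w : ℝ → ℝ := fun s => 2/Real.pi * Real.sin (Real.pi/2*s) with hw
  have hwc : Continuous w :=
    continuous_const.mul (Real.continuous_sin.comp (continuous_const.mul continuous_id))
  set K : ℝ → ℝ → ℝ≥0∞ := fun s θ => ENNReal.ofReal (w s) * (Iic s).indicator f θ with hK
  have hKm : Measurable (Function.uncurry K) := by
    have : Function.uncurry K = fun p : ℝ × ℝ =>
        ENNReal.ofReal (w p.1) * ({q : ℝ × ℝ | q.2 ≤ q.1}.indicator (fun q => f q.2) p) := by
      funext p
      simp only [Function.uncurry, hK, Set.indicator_apply, Set.mem_Iic, Set.mem_setOf_eq]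
    rw [this]
    exact ((hwc.measurable.comp measurable_fst).ennreal_ofReal).mul
      ((hfm.comp measurable_snd).indicator (measurableSet_le measurable_snd measurable_fst))
  -- inner evaluation on the left
  have innerL : ∀ s ∈ Ioc (0:ℝ) 1,
      (∫⁻ θ, K s θ ∂ν) = ENNReal.ofReal (w s) * ∫⁻ θ in Ioc (0:ℝ) s, f θ := by
    intro s hs
    have hset : Iic s ∩ Ioc (0:ℝ) 1 = Ioc (0:ℝ) s := by
      ext θ
      simp only [mem_inter_iff, mem_Iic, mem_Ioc]
      exact ⟨fun ⟨ha, hb, _⟩ => ⟨hb, ha⟩, fun ⟨ha, hb⟩ => ⟨hb, ha, hb.trans hs.2⟩⟩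
    rw [hK]
    rw [lintegral_const_mul' _ _ ENNReal.ofReal_ne_top,
      lintegral_indicator measurableSet_Iic, hν, Measure.restrict_restrict measurableSet_Iic,
      hset]
  -- inner evaluation on the right
  have innerR : ∀ θ ∈ Ioo (0:ℝ) 1,
      (∫⁻ s, K s θ ∂ν) ≤ ENNReal.ofReal (4/Real.pi^2 * x θ ^ 2) := by
    intro θ hθ
    have hset : Ici θ ∩ Ioc (0:ℝ) 1 = Icc θ 1 := by
      ext s
      simp only [mem_inter_iff, mem_Ici, mem_Ioc, mem_Icc]
      exact ⟨fun ⟨ha, _, hb⟩ => ⟨ha, hb⟩, fun ⟨ha, hb⟩ => ⟨ha, hθ.1.trans_le ha, hb⟩⟩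
    have hrw : ∀ s, K s θ = (Ici θ).indicator (fun s => ENNReal.ofReal (w s) * f θ) s := by
      intro s
      by_cases h : θ ≤ s <;>
        simp [hK, Set.indicator_apply, Set.mem_Iic, Set.mem_Ici, h]
    have hwint : (∫⁻ s in Icc θ 1, ENNReal.ofReal (w s))
        = ENNReal.ofReal (2/Real.pi * (2/Real.pi * cw θ)) := by
      have hwi : IntegrableOn w (Icc θ 1) := hwc.integrableOn_Icc
      have hwnn : ∀ᵐ s ∂(volume.restrict (Icc θ 1)), 0 ≤ w s := by
        refine (ae_restrict_iff' measurableSet_Icc).2 (ae_of_all _ fun s hsm => ?_)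
        have : 0 ≤ Real.sin (Real.pi/2*s) := by
          apply Real.sin_nonneg_of_nonneg_of_le_pi
          · nlinarith [Real.pi_pos, hθ.1.le.trans hsm.1]
          · nlinarith [Real.pi_pos, hsm.2]
        have h2p : (0:ℝ) ≤ 2/Real.pi := by positivity
        exact mul_nonneg h2p this
      rw [← ofReal_integral_eq_lintegral_ofReal hwi hwnn]
      congr 1
      rw [integral_Icc_eq_integral_Ioc, ← intervalIntegral.integral_of_le hθ.2.le, hw]
      rw [intervalIntegral.integral_const_mul, vol_sin_int]
    calc (∫⁻ s, K s θ ∂ν)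
        = ∫⁻ s, (Ici θ).indicator (fun s => ENNReal.ofReal (w s) * f θ) s ∂ν := by
          exact lintegral_congr hrw
      _ = ∫⁻ s in Icc θ 1, ENNReal.ofReal (w s) * f θ := by
          rw [lintegral_indicator measurableSet_Ici, hν,
            Measure.restrict_restrict measurableSet_Ici, hset]
      _ = (∫⁻ s in Icc θ 1, ENNReal.ofReal (w s)) * f θ :=
          lintegral_mul_const' _ _ ENNReal.ofReal_ne_top
      _ = ENNReal.ofReal (2/Real.pi * (2/Real.pi * cw θ)) * ENNReal.ofReal (x θ ^ 2 / cw θ) := by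
          rw [hwint, hf]
      _ ≤ ENNReal.ofReal (4/Real.pi^2 * x θ ^ 2) := by
          have hcw := cw_pos hθ.1 hθ.2
          rw [← ENNReal.ofReal_mul (mul_nonneg (by positivity) (mul_nonneg (by positivity) hcw.le))]
          apply ENNReal.ofReal_le_ofReal
          have hc : cw θ ≠ 0 := (cw_pos hθ.1 hθ.2).ne'
          apply le_of_eq
          field_simp
          ring
  -- measurability of the primitive
  have hcont : ContinuousOn (fun s => ∫ θ in Ioc (0:ℝ) s, x θ) (Icc (0:ℝ) 1) :=
    continuousOn_primitive h1
  have hTm : AEStronglyMeasurable (fun s => (∫ θ in (0:ℝ)..s, x θ) ^ 2) ν := by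
    have hbase : AEStronglyMeasurable (fun s => ∫ θ in Ioc (0:ℝ) s, x θ) ν :=
      (hcont.aestronglyMeasurable measurableSet_Icc).mono_measure
        (Measure.restrict_mono Ioc_subset_Icc_self le_rfl)
    have heq : (fun s => ∫ θ in Ioc (0:ℝ) s, x θ)
        =ᵐ[ν] fun s => ∫ θ in (0:ℝ)..s, x θ := by
      refine (ae_restrict_iff' measurableSet_Ioc).2 (ae_of_all _ fun s hs => ?_)
      exact (intervalIntegral.integral_of_le hs.1.le).symm
    exact ((hbase.congr heq).pow 2)
  -- main chain
  have main : (∫⁻ s in Ioc (0:ℝ) 1, ENNReal.ofReal ((∫ θ in (0:ℝ)..s, x θ) ^ 2))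
      ≤ ENNReal.ofReal (∫ θ in Ioc (0:ℝ) 1, 4/Real.pi^2 * x θ ^ 2) := by
    calc (∫⁻ s in Ioc (0:ℝ) 1, ENNReal.ofReal ((∫ θ in (0:ℝ)..s, x θ) ^ 2))
        = ∫⁻ s in Ioo (0:ℝ) 1, ENNReal.ofReal ((∫ θ in (0:ℝ)..s, x θ) ^ 2) :=
          (setLIntegral_congr Ioo_ae_eq_Ioc).symm
      _ ≤ ∫⁻ s in Ioo (0:ℝ) 1, (∫⁻ θ, K s θ ∂ν) := by
          refine setLIntegral_mono' measurableSet_Ioo fun s hs => ?_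
          rw [innerL s ⟨hs.1, hs.2.le⟩]
          exact stepA hm h1 hs
      _ = ∫⁻ s in Ioc (0:ℝ) 1, (∫⁻ θ, K s θ ∂ν) := setLIntegral_congr Ioo_ae_eq_Ioc
      _ = ∫⁻ θ in Ioc (0:ℝ) 1, (∫⁻ s, K s θ ∂ν) := lintegral_lintegral_swap hKm.aemeasurable
      _ = ∫⁻ θ in Ioo (0:ℝ) 1, (∫⁻ s, K s θ ∂ν) := (setLIntegral_congr Ioo_ae_eq_Ioc).symm
      _ ≤ ∫⁻ θ in Ioo (0:ℝ) 1, ENNReal.ofReal (4/Real.pi^2 * x θ ^ 2) :=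
          setLIntegral_mono' measurableSet_Ioo innerR
      _ = ∫⁻ θ in Ioc (0:ℝ) 1, ENNReal.ofReal (4/Real.pi^2 * x θ ^ 2) :=
          setLIntegral_congr Ioo_ae_eq_Ioc
      _ = ENNReal.ofReal (∫ θ in Ioc (0:ℝ) 1, 4/Real.pi^2 * x θ ^ 2) :=
          (ofReal_integral_eq_lintegral_ofReal
            ((h2.mono_set Ioc_subset_Icc_self).const_mul _)
            (ae_of_all _ fun θ => by positivity)).symm
  have hRnn : (0:ℝ) ≤ ∫ θ in Ioc (0:ℝ) 1, 4/Real.pi^2 * x θ ^ 2 :=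
    setIntegral_nonneg measurableSet_Ioc fun θ _ => by positivity
  have lhs_eq : (∫ s in (0:ℝ)..1, (∫ θ in (0:ℝ)..s, x θ) ^ 2)
      = (∫⁻ s in Ioc (0:ℝ) 1, ENNReal.ofReal ((∫ θ in (0:ℝ)..s, x θ) ^ 2)).toReal := by
    rw [intervalIntegral.integral_of_le zero_le_one]
    exact integral_eq_lintegral_of_nonneg_ae (ae_of_all _ fun s => sq_nonneg _) hTm
  have rhs_eq : (∫ θ in Ioc (0:ℝ) 1, 4/Real.pi^2 * x θ ^ 2)
      = 4/Real.pi^2 * ∫ s in (0:ℝ)..1, x s ^ 2 := by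
    rw [intervalIntegral.integral_of_le zero_le_one, MeasureTheory.integral_const_mul]
  rw [lhs_eq, ← rhs_eq]
  calc (∫⁻ s in Ioc (0:ℝ) 1, ENNReal.ofReal ((∫ θ in (0:ℝ)..s, x θ) ^ 2)).toReal
      ≤ (ENNReal.ofReal (∫ θ in Ioc (0:ℝ) 1, 4/Real.pi^2 * x θ ^ 2)).toReal :=
        ENNReal.toReal_mono ENNReal.ofReal_ne_top main
    _ = ∫ θ in Ioc (0:ℝ) 1, 4/Real.pi^2 * x θ ^ 2 := ENNReal.toReal_ofReal hRnn

private lemma volterra_upper {x : ℝ → ℝ} (hx : MemLp x 2 (volume.restrict (Icc (0:ℝ) 1))) :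
    (∫ s in (0:ℝ)..1, (∫ θ in (0:ℝ)..s, x θ) ^ 2)
      ≤ 4/Real.pi^2 * ∫ s in (0:ℝ)..1, x s ^ 2 := by
  haveI : IsFiniteMeasure (volume.restrict (Icc (0:ℝ) 1)) :=
    ⟨by rw [Measure.restrict_apply_univ]; exact measure_Icc_lt_top⟩
  obtain ⟨g, hgm, hfg⟩ := hx.aestronglyMeasurable
  have h1x : IntegrableOn x (Icc (0:ℝ) 1) := hx.integrable one_le_two
  have h2x : IntegrableOn (fun t => x t ^ 2) (Icc (0:ℝ) 1) := hx.integrable_sq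
  have hfg2 : (fun t => x t ^ 2) =ᵐ[volume.restrict (Icc (0:ℝ) 1)] fun t => g t ^ 2 :=
    hfg.mono fun t ht => by dsimp only; rw [ht]
  have h1g : IntegrableOn g (Icc (0:ℝ) 1) := h1x.congr hfg
  have h2g : IntegrableOn (fun t => g t ^ 2) (Icc (0:ℝ) 1) := h2x.congr hfg2
  have key := volterra_key hgm.measurable h1g h2g
  -- transfer integrals from g to x
  have e1 : (∫ s in (0:ℝ)..1, x s ^ 2) = ∫ s in (0:ℝ)..1, g s ^ 2 := by
    rw [intervalIntegral.integral_of_le zero_le_one,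
      intervalIntegral.integral_of_le zero_le_one]
    exact integral_congr_ae
      (hfg2.filter_mono (ae_mono (Measure.restrict_mono Ioc_subset_Icc_self le_rfl)))
  have e2 : ∀ s ∈ Icc (0:ℝ) 1, (∫ θ in (0:ℝ)..s, x θ) = ∫ θ in (0:ℝ)..s, g θ := by
    intro s hs
    rw [intervalIntegral.integral_of_le hs.1, intervalIntegral.integral_of_le hs.1]
    refine integral_congr_ae (hfg.filter_mono (ae_mono (Measure.restrict_mono ?_ le_rfl)))
    exact fun θ hθ => ⟨hθ.1.le, hθ.2.trans hs.2⟩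
  have e3 : (∫ s in (0:ℝ)..1, (∫ θ in (0:ℝ)..s, x θ) ^ 2)
      = ∫ s in (0:ℝ)..1, (∫ θ in (0:ℝ)..s, g θ) ^ 2 := by
    apply intervalIntegral.integral_congr
    intro s hs
    rw [uIcc_of_le zero_le_one] at hs
    show (∫ θ in (0:ℝ)..s, x θ) ^ 2 = (∫ θ in (0:ℝ)..s, g θ) ^ 2
    rw [e2 s hs]
  rw [e3, e1]
  exact key


private lemma volterra_attained :
    ∃ x : ℝ → ℝ,
        MemLp x 2 (volume.restrict (Set.Icc (0:ℝ) 1)) ∧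
        (∫ s in (0:ℝ)..1, x s ^ 2) = 1 ∧
        (2/Real.pi) = Real.sqrt (∫ s in (0:ℝ)..1, (∫ θ in (0:ℝ)..s, x θ) ^ 2) := by
  haveI : IsFiniteMeasure (volume.restrict (Icc (0:ℝ) 1)) :=
    ⟨by rw [Measure.restrict_apply_univ]; exact measure_Icc_lt_top⟩
  refine ⟨fun θ => Real.sqrt 2 * cw θ, ?_, ?_, ?_⟩
  · refine MemLp.of_bound ((continuous_const.mul cw_cont).aestronglyMeasurable) (Real.sqrt 2) ?_
    refine ae_of_all _ fun θ => ?_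
    rw [Real.norm_eq_abs, abs_mul, abs_of_nonneg (Real.sqrt_nonneg 2)]
    have : |cw θ| ≤ 1 := Real.abs_cos_le_one _
    nlinarith [Real.sqrt_nonneg 2]
  · have : ∀ θ : ℝ, (Real.sqrt 2 * cw θ) ^ 2 = 2 * cw θ ^ 2 := by
      intro θ
      rw [mul_pow, Real.sq_sqrt (by norm_num : (0:ℝ) ≤ 2)]
    simp only [this]
    rw [intervalIntegral.integral_const_mul, vol_cos_sq_int]
    norm_num
  · have hinner : ∀ s : ℝ, (∫ θ in (0:ℝ)..s, Real.sqrt 2 * cw θ)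
        = Real.sqrt 2 * (2/Real.pi * Real.sin (Real.pi/2*s)) := by
      intro s
      rw [intervalIntegral.integral_const_mul, vol_cos_int]
    have houter : (∫ s in (0:ℝ)..1, (∫ θ in (0:ℝ)..s, Real.sqrt 2 * cw θ) ^ 2)
        = 4/Real.pi^2 := by
      calc (∫ s in (0:ℝ)..1, (∫ θ in (0:ℝ)..s, Real.sqrt 2 * cw θ) ^ 2)
          = ∫ s in (0:ℝ)..1, 8/Real.pi^2 * Real.sin (Real.pi/2*s)^2 := by
            apply intervalIntegral.integral_congr
            intro s _
            show (∫ θ in (0:ℝ)..s, Real.sqrt 2 * cw θ) ^ 2 = _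
            rw [hinner s, mul_pow, Real.sq_sqrt (by norm_num : (0:ℝ) ≤ 2), mul_pow]
            ring
        _ = 8/Real.pi^2 * (1/2) := by
            rw [intervalIntegral.integral_const_mul, vol_sin_sq_int]
        _ = 4/Real.pi^2 := by ring
    rw [houter, show (4:ℝ)/Real.pi^2 = (2/Real.pi)^2 by ring,
      Real.sqrt_sq (by positivity)]

/-- The induced L2[0,1] operator norm of the Volterra operator
`(Tx)(s) = ∫_0^s x(θ)dθ` equals `2/π`: `2/π` is the least upper bound of the
values `‖Tx‖_{L2}` over all `x ∈ L2[0,1]` with `‖x‖_{L2} = 1`. -/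
theorem volterra_operator_norm :
    IsLUB {r : ℝ | ∃ x : ℝ → ℝ,
        MemLp x 2 (volume.restrict (Set.Icc (0:ℝ) 1)) ∧
        (∫ s in (0:ℝ)..1, x s ^ 2) = 1 ∧
        r = Real.sqrt (∫ s in (0:ℝ)..1, (∫ θ in (0:ℝ)..s, x θ) ^ 2)}
      (2 / Real.pi) := by
  constructor
  · rintro r ⟨x, hx, hnorm, rfl⟩
    have h := volterra_upper hx
    rw [hnorm, mul_one] at h
    calc Real.sqrt (∫ s in (0:ℝ)..1, (∫ θ in (0:ℝ)..s, x θ) ^ 2)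
        ≤ Real.sqrt (4/Real.pi^2) := Real.sqrt_le_sqrt h
      _ = 2/Real.pi := by
          rw [show (4:ℝ)/Real.pi^2 = (2/Real.pi)^2 by ring,
            Real.sqrt_sq (by positivity)]
  · intro b hb
    obtain ⟨x, h1, h2, h3⟩ := volterra_attained
    exact hb ⟨x, h1, h2, h3⟩

end
end

section
/- Leibniz differentiation of a 3-PI operator: if R0 ∈ C¹[a,b], R1, R2 ∈ C¹([a,b]²), and x ∈ H¹[a,b], then d/ds[(P_{R0,R1,R2}x)(s)] = (∂_s R0(s) + R1(s,s) − R2(s,s))x(s) + R0(s)x'(s) + ∫_a^s ∂_s R1(s,θ)x(θ)dθ + ∫_s^b ∂_s R2(s,θ)x(θ)dθ. -/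
open MeasureTheory intervalIntegral

/-- Parameter differentiation of an interval integral with fixed endpoints. -/
lemma paramDeriv_aux (f f' : ℝ → ℝ → ℝ)
    (hf : Continuous fun q : ℝ × ℝ => f q.1 q.2)
    (hf' : Continuous fun q : ℝ × ℝ => f' q.1 q.2)
    (hd : ∀ s θ, HasDerivAt (fun u => f u θ) (f' s θ) s)
    (c d s : ℝ) :
    HasDerivAt (fun u => ∫ θ in c..d, f u θ) (∫ θ in c..d, f' s θ) s := by
  have hK : IsCompact ((Set.Icc (s - 1) (s + 1)) ×ˢ Set.uIcc c d) :=
    (isCompact_Icc).prod isCompact_uIcc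
  obtain ⟨C, hC⟩ := hK.exists_bound_of_continuousOn hf'.continuousOn
  have key := intervalIntegral.hasDerivAt_integral_of_dominated_loc_of_deriv_le
    (F := fun u θ => f u θ) (F' := fun u θ => f' u θ) (x₀ := s) (a := c) (b := d)
    (bound := fun _ => C) (μ := volume) (𝕜 := ℝ) (Metric.ball_mem_nhds s one_pos)
    (Filter.Eventually.of_forall fun u =>
      ((hf.comp (continuous_const.prodMk continuous_id)).aestronglyMeasurable : _))
    ((hf.comp (continuous_const.prodMk continuous_id)).intervalIntegrable _ _)
    ((hf'.comp (continuous_const.prodMk continuous_id)).aestronglyMeasurable : _)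
    (Filter.Eventually.of_forall fun θ hθ u hu => by
      have hu' : u ∈ Set.Icc (s - 1) (s + 1) := by
        have := Metric.mem_ball.1 hu
        rw [Real.dist_eq] at this
        constructor <;> [linarith [abs_le.1 this.le]; linarith [(abs_le.1 this.le).2]]
      exact hC (u, θ) ⟨hu', Set.uIoc_subset_uIcc hθ⟩)
    (intervalIntegrable_const)
    (Filter.Eventually.of_forall fun θ _ u _ => hd u θ)
  exact key.2

/-- Derivative of `u ↦ ∫ θ in s..u, g u θ` at `u = s` is `g s s`. -/
lemma endpointDeriv_aux (g : ℝ → ℝ → ℝ)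
    (hg : Continuous fun q : ℝ × ℝ => g q.1 q.2) (s : ℝ) :
    HasDerivAt (fun u => ∫ θ in s..u, g u θ) (g s s) s := by
  rw [hasDerivAt_iff_isLittleO, Asymptotics.isLittleO_iff]
  intro ε hε
  obtain ⟨δ, hδ, hδ'⟩ := Metric.continuousAt_iff.1 (hg.continuousAt (x := (s, s)))
    ε hε
  have : ∀ᶠ u in nhds s, dist u s < δ := Metric.ball_mem_nhds s hδ
  filter_upwards [this] with u hu
  have hconst : ∫ θ in s..u, g s s = (u - s) • g s s := by
    simp [intervalIntegral.integral_const]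
  have hint : IntervalIntegrable (fun θ => g u θ) volume s u :=
    ((hg.comp (continuous_const.prodMk continuous_id)).intervalIntegrable _ _)
  have hsplit : (∫ θ in s..u, g u θ) - (u - s) • g s s
      = ∫ θ in s..u, (g u θ - g s s) := by
    rw [intervalIntegral.integral_sub hint intervalIntegrable_const, hconst]
  have hbd : ‖∫ θ in s..u, (g u θ - g s s)‖ ≤ ε * |u - s| := by
    apply intervalIntegral.norm_integral_le_of_norm_le_const
    intro θ hθ
    have hθ' : |θ - s| ≤ |u - s| := Set.abs_sub_left_of_mem_uIcc (Set.uIoc_subset_uIcc hθ)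
    have hdist : dist (u, θ) (s, s) < δ := by
      rw [Prod.dist_eq]
      simp only [Real.dist_eq]
      exact max_lt (by rwa [Real.dist_eq] at hu)
        (lt_of_le_of_lt hθ' (by rwa [Real.dist_eq] at hu))
    have := hδ' hdist
    rw [Real.dist_eq] at this
    exact this.le
  simp only [intervalIntegral.integral_same, sub_zero]
  calc ‖(∫ θ in s..u, g u θ) - (u - s) • g s s‖
      = ‖∫ θ in s..u, (g u θ - g s s)‖ := by rw [hsplit]
    _ ≤ ε * |u - s| := hbd
    _ = ε * ‖u - s‖ := by rw [Real.norm_eq_abs]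

/-- Leibniz differentiation of a 3-PI operator: for `R0 ∈ C¹[a,b]`,
`R1, R2 ∈ C¹([a,b]²)` and `x ∈ H¹[a,b]`,
`d/ds (P_{R0,R1,R2}x)(s) = (∂_sR0(s) + R1(s,s) − R2(s,s))x(s) + R0(s)x'(s)
  + ∫_a^s ∂_sR1(s,θ)x(θ)dθ + ∫_s^b ∂_sR2(s,θ)x(θ)dθ`. -/
theorem leibniz_diff_3PI (a b : ℝ) (hab : a ≤ b)
    (R0 R0' : ℝ → ℝ) (R1 R2 R1s R2s : ℝ → ℝ → ℝ) (x x' : ℝ → ℝ)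
    (hR0 : ∀ s, HasDerivAt R0 (R0' s) s)
    (hR1 : Continuous fun q : ℝ × ℝ => R1 q.1 q.2)
    (hR2 : Continuous fun q : ℝ × ℝ => R2 q.1 q.2)
    (hR1s : Continuous fun q : ℝ × ℝ => R1s q.1 q.2)
    (hR2s : Continuous fun q : ℝ × ℝ => R2s q.1 q.2)
    (hdR1 : ∀ s θ, HasDerivAt (fun u => R1 u θ) (R1s s θ) s)
    (hdR2 : ∀ s θ, HasDerivAt (fun u => R2 u θ) (R2s s θ) s)
    (hx : Continuous x)
    (hx' : ∀ s ∈ Set.Icc a b, HasDerivWithinAt x (x' s) (Set.Icc a b) s) :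
    ∀ s ∈ Set.Icc a b,
      HasDerivWithinAt
        (fun u => R0 u * x u + (∫ θ in a..u, R1 u θ * x θ)
                    + ∫ θ in u..b, R2 u θ * x θ)
        ((R0' s + R1 s s - R2 s s) * x s + R0 s * x' s
          + (∫ θ in a..s, R1s s θ * x θ) + ∫ θ in s..b, R2s s θ * x θ)
        (Set.Icc a b) s := by
  intro s hs
  set f1 : ℝ → ℝ → ℝ := fun u θ => R1 u θ * x θ with hf1
  set f2 : ℝ → ℝ → ℝ := fun u θ => R2 u θ * x θ with hf2
  have hf1c : Continuous fun q : ℝ × ℝ => f1 q.1 q.2 := hR1.mul (hx.comp continuous_snd)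
  have hf2c : Continuous fun q : ℝ × ℝ => f2 q.1 q.2 := hR2.mul (hx.comp continuous_snd)
  have hf1sc : Continuous fun q : ℝ × ℝ => R1s q.1 q.2 * x q.2 :=
    hR1s.mul (hx.comp continuous_snd)
  have hf2sc : Continuous fun q : ℝ × ℝ => R2s q.1 q.2 * x q.2 :=
    hR2s.mul (hx.comp continuous_snd)
  have hd1 : ∀ u θ, HasDerivAt (fun v => f1 v θ) (R1s u θ * x θ) u :=
    fun u θ => (hdR1 u θ).mul_const (x θ)
  have hd2 : ∀ u θ, HasDerivAt (fun v => f2 v θ) (R2s u θ * x θ) u :=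
    fun u θ => (hdR2 u θ).mul_const (x θ)
  -- term 0 : product
  have h0 : HasDerivWithinAt (fun u => R0 u * x u) (R0' s * x s + R0 s * x' s)
      (Set.Icc a b) s := ((hR0 s).hasDerivWithinAt).mul (hx' s hs)
  -- term 1 : ∫_a^u f1 u θ
  have h1 : HasDerivAt (fun u => ∫ θ in a..u, f1 u θ)
      ((∫ θ in a..s, R1s s θ * x θ) + f1 s s) s := by
    have heq : (fun u => ∫ θ in a..u, f1 u θ)
        = fun u => (∫ θ in a..s, f1 u θ) + ∫ θ in s..u, f1 u θ := by
      funext u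
      exact (intervalIntegral.integral_add_adjacent_intervals
        (Continuous.intervalIntegrable (by fun_prop) _ _)
        (Continuous.intervalIntegrable (by fun_prop) _ _)).symm
    rw [heq]
    exact (paramDeriv_aux f1 (fun u θ => R1s u θ * x θ) hf1c hf1sc hd1 a s s).add
      (endpointDeriv_aux f1 hf1c s)
  -- term 2 : ∫_u^b f2 u θ
  have h2 : HasDerivAt (fun u => ∫ θ in u..b, f2 u θ)
      ((∫ θ in s..b, R2s s θ * x θ) - f2 s s) s := by
    have heq : (fun u => ∫ θ in u..b, f2 u θ)
        = fun u => (∫ θ in s..b, f2 u θ) - ∫ θ in s..u, f2 u θ := by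
      funext u
      rw [eq_sub_iff_add_eq, add_comm]
      exact intervalIntegral.integral_add_adjacent_intervals
        (Continuous.intervalIntegrable (by fun_prop) _ _)
        (Continuous.intervalIntegrable (by fun_prop) _ _)
    rw [heq]
    exact (paramDeriv_aux f2 (fun u θ => R2s u θ * x θ) hf2c hf2sc hd2 s b s).sub
      (endpointDeriv_aux f2 hf2c s)
  have := (h0.add h1.hasDerivWithinAt).add h2.hasDerivWithinAt
  convert this using 1
  · rfl
  · rfl
  · rfl
  simp only [hf1, hf2]
  ring
end
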